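/- arXiv:1308.2719 — 5 statements merged into one kernel-verified Lean document; each statement's English description precedes it below -/
import Mathlib

section
/- Let X be an n×L indicator matrix, Y ∈ ℝⁿ, and λ > 0. If (μ̂, β̂) ∈ ℝ × ℝᴸ minimizes the objective (μ, β) ↦ (1/2)‖Y − μ·1 − Xβ‖₂² + λ‖β‖₂, then the mean of the entries of β̂ is zero, i.e. ∑ᵢ₌₁ᴸ β̂ᵢ = 0. -/
open scoped BigOperators

/-- If `(μhat, βhat)` minimizes the group-lasso objective
`(μ, β) ↦ (1/2)‖Y − μ·1 − Xβ‖₂² + λ‖β‖₂` where `X` is an `n×L` indicator matrix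
and `λ > 0`, then the entries of `βhat` sum to zero. -/
theorem stmt_0 (n L : ℕ) (X : Matrix (Fin n) (Fin L) ℝ)
    (hX : ∀ k : Fin n, ∃ i : Fin L, ∀ j : Fin L, X k j = if j = i then (1 : ℝ) else 0)
    (Y : Fin n → ℝ) (lam : ℝ) (hlam : 0 < lam)
    (μhat : ℝ) (βhat : Fin L → ℝ)
    (hmin : ∀ (μ : ℝ) (β : Fin L → ℝ),
      (1 / 2) * (∑ k, (Y k - μhat - X.mulVec βhat k) ^ 2)
          + lam * Real.sqrt (∑ i, βhat i ^ 2) ≤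
        (1 / 2) * (∑ k, (Y k - μ - X.mulVec β k) ^ 2)
          + lam * Real.sqrt (∑ i, β i ^ 2)) :
    ∑ i, βhat i = 0 := by
  by_contra hS
  set S : ℝ := ∑ i, βhat i with hSdef
  have hL : L ≠ 0 := by
    rintro rfl
    exact hS (by simp [hSdef])
  have hLpos : (0:ℝ) < L := by positivity
  set c : ℝ := S / L with hc
  -- the shifted candidate gives the same residuals
  have hres : ∀ k, Y k - (μhat + c) - X.mulVec (fun i => βhat i - c) k
      = Y k - μhat - X.mulVec βhat k := by
    intro k
    obtain ⟨i, hi⟩ := hX k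
    have h1 : X.mulVec (fun i => βhat i - c) k = βhat i - c := by
      simp only [Matrix.mulVec, dotProduct]
      rw [Finset.sum_eq_single i]
      · rw [hi i]; simp
      · intro j _ hj; rw [hi j]; simp [hj]
      · simp
    have h2 : X.mulVec βhat k = βhat i := by
      simp only [Matrix.mulVec, dotProduct]
      rw [Finset.sum_eq_single i]
      · rw [hi i]; simp
      · intro j _ hj; rw [hi j]; simp [hj]
      · simp
    rw [h1, h2]; ring
  have key := hmin (μhat + c) (fun i => βhat i - c)
  simp only [hres] at key
  have hpen : Real.sqrt (∑ i, βhat i ^ 2) ≤ Real.sqrt (∑ i, (βhat i - c) ^ 2) := by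
    have := le_of_add_le_add_left key
    exact le_of_mul_le_mul_left this hlam
  have hsum : ∑ i, (βhat i - c) ^ 2 = (∑ i, βhat i ^ 2) - S ^ 2 / L := by
    have : ∑ i, (βhat i - c) ^ 2
        = (∑ i, βhat i ^ 2) - 2 * c * S + L * c ^ 2 := by
      simp only [sub_sq]
      rw [Finset.sum_add_distrib, Finset.sum_sub_distrib]
      have hm : ∑ x, 2 * βhat x * c = 2 * c * S := by
        rw [hSdef, mul_assoc, Finset.mul_sum, Finset.mul_sum]
        exact Finset.sum_congr rfl (fun x _ => by ring)
      rw [hm, Finset.sum_const, Finset.card_univ, Fintype.card_fin, nsmul_eq_mul]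
    rw [this, hc]
    field_simp
    ring
  have hlt : ∑ i, (βhat i - c) ^ 2 < ∑ i, βhat i ^ 2 := by
    rw [hsum]
    have : 0 < S ^ 2 / L := div_pos (by positivity) hLpos
    linarith
  have := Real.sqrt_lt_sqrt (by positivity) hlt
  linarith [hpen]
end

section
/- Let X be an n×L indicator matrix, Y ∈ {0,1}ⁿ, and λ > 0. If (μ̂, β̂) ∈ ℝ × ℝᴸ minimizes the logistic-loss objective (μ, β) ↦ −[Yᵀ(μ·1 + Xβ) − ∑ₖ₌₁ⁿ log(1 + exp((μ·1 + Xβ)ₖ))] + λ‖β‖₂, then the mean of the entries of β̂ is zero, i.e. ∑ᵢ₌₁ᴸ β̂ᵢ = 0. -/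
/-! Replacing `(μ, β)` by `(μ + c, β - c·1)` does not change the linear predictor
`μ·1 + Xβ`, because every row of an indicator matrix sums to one. Hence the loss is the same
and, at a minimizer, `‖β̂‖₂ ≤ ‖β̂ - c·1‖₂` for every `c`. Taking `c` to be the mean of `β̂`
gives `‖β̂ - c·1‖₂² = ‖β̂‖₂² - L c²`, which forces `c = 0`. -/

lemma Matrix.sum_row_eq_one_of_indicator {m n : Type*} [Fintype n] [DecidableEq n]
    {R : Type*} [Semiring R] (X : Matrix m n R)
    (hX : ∀ k, ∃ i, ∀ j, X k j = if j = i then (1 : R) else 0) (k : m) :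
    ∑ j, X k j = 1 := by
  obtain ⟨i, hi⟩ := hX k
  simp [hi]

lemma Matrix.mulVec_sub_const_of_sum_row_eq_one {m n : Type*} [Fintype n]
    {R : Type*} [CommRing R] (X : Matrix m n R) (hX : ∀ k, ∑ j, X k j = 1)
    (β : n → R) (c : R) (k : m) :
    X.mulVec (fun i => β i - c) k = X.mulVec β k - c := by
  simp only [Matrix.mulVec, dotProduct, mul_sub, Finset.sum_sub_distrib, ← Finset.sum_mul,
    hX k, one_mul]

lemma Finset.sum_sq_sub_const {ι : Type*} [Fintype ι] (β : ι → ℝ) (c : ℝ) :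
    ∑ i, (β i - c) ^ 2 = ∑ i, β i ^ 2 - 2 * c * ∑ i, β i + Fintype.card ι * c ^ 2 := by
  have hexpand : ∀ i, (β i - c) ^ 2 = β i ^ 2 - 2 * c * β i + c ^ 2 := fun i => by ring
  simp only [hexpand, Finset.sum_add_distrib, Finset.sum_sub_distrib, ← Finset.mul_sum,
    Finset.sum_const, Finset.card_univ, nsmul_eq_mul]

lemma Finset.sum_eq_zero_of_sum_sq_le_sum_sq_sub_mean {ι : Type*} [Fintype ι] (β : ι → ℝ)
    (h : ∑ i, β i ^ 2 ≤ ∑ i, (β i - (∑ j, β j) / Fintype.card ι) ^ 2) :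
    ∑ i, β i = 0 := by
  rcases isEmpty_or_nonempty ι with hι | hι
  · exact Finset.sum_of_isEmpty _
  have hcard : (0 : ℝ) < Fintype.card ι := by exact_mod_cast Fintype.card_pos
  rw [Finset.sum_sq_sub_const] at h
  have hsq : (∑ i, β i) ^ 2 ≤ 0 := by
    have hid : (∑ i, β i) ^ 2 = Fintype.card ι * (2 * ((∑ j, β j) / Fintype.card ι) * ∑ i, β i
        - Fintype.card ι * ((∑ j, β j) / Fintype.card ι) ^ 2) := by
      field_simp
      ring
    rw [hid]
    exact mul_nonpos_of_nonneg_of_nonpos hcard.le (by linarith)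
  exact pow_eq_zero_iff two_ne_zero |>.mp (le_antisymm hsq (sq_nonneg _))

theorem stmt_1_general (n L : ℕ) (X : Matrix (Fin n) (Fin L) ℝ)
    (hX : ∀ k : Fin n, ∃ i : Fin L, ∀ j : Fin L, X k j = if j = i then (1 : ℝ) else 0)
    (Y : Fin n → ℝ)
    (lam : ℝ) (hlam : 0 < lam)
    (μhat : ℝ) (βhat : Fin L → ℝ)
    (hmin : ∀ (μ : ℝ) (β : Fin L → ℝ),
      -((∑ k, Y k * (μhat + X.mulVec βhat k))
            - ∑ k, Real.log (1 + Real.exp (μhat + X.mulVec βhat k)))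
          + lam * Real.sqrt (∑ i, βhat i ^ 2) ≤
        -((∑ k, Y k * (μ + X.mulVec β k))
            - ∑ k, Real.log (1 + Real.exp (μ + X.mulVec β k)))
          + lam * Real.sqrt (∑ i, β i ^ 2)) :
    ∑ i, βhat i = 0 := by
  set c := (∑ i, βhat i) / Fintype.card (Fin L)
  have hfit : ∀ k, μhat + c + X.mulVec (fun i => βhat i - c) k = μhat + X.mulVec βhat k :=
    fun k => by
      rw [X.mulVec_sub_const_of_sum_row_eq_one (X.sum_row_eq_one_of_indicator hX)]
      ring
  have key := hmin (μhat + c) (fun i => βhat i - c)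
  simp only [hfit] at key
  have hnorm : √(∑ i, βhat i ^ 2) ≤ √(∑ i, (βhat i - c) ^ 2) :=
    le_of_mul_le_mul_left (by linarith) hlam
  exact Finset.sum_eq_zero_of_sum_sq_le_sum_sq_sub_mean βhat
    ((Real.sqrt_le_sqrt_iff (by positivity)).mp hnorm)

/-- If `(μhat, βhat)` minimizes the logistic-loss group-lasso objective
`(μ, β) ↦ −[Yᵀ(μ·1 + Xβ) − ∑ₖ log(1 + exp((μ·1 + Xβ)ₖ))] + λ‖β‖₂` where `X` is an `n×L`
indicator matrix, `Y ∈ {0,1}ⁿ` and `λ > 0`, then the entries of `βhat` sum to zero. -/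
theorem stmt_1 (n L : ℕ) (X : Matrix (Fin n) (Fin L) ℝ)
    (hX : ∀ k : Fin n, ∃ i : Fin L, ∀ j : Fin L, X k j = if j = i then (1 : ℝ) else 0)
    (Y : Fin n → ℝ) (hY : ∀ k, Y k = 0 ∨ Y k = 1)
    (lam : ℝ) (hlam : 0 < lam)
    (μhat : ℝ) (βhat : Fin L → ℝ)
    (hmin : ∀ (μ : ℝ) (β : Fin L → ℝ),
      -((∑ k, Y k * (μhat + X.mulVec βhat k))
            - ∑ k, Real.log (1 + Real.exp (μhat + X.mulVec βhat k)))
          + lam * Real.sqrt (∑ i, βhat i ^ 2) ≤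
        -((∑ k, Y k * (μ + X.mulVec β k))
            - ∑ k, Real.log (1 + Real.exp (μ + X.mulVec β k)))
          + lam * Real.sqrt (∑ i, β i ^ 2)) :
    ∑ i, βhat i = 0 :=
  stmt_1_general n L X hX Y lam hlam μhat βhat hmin
end

section
/- Let A be an n×m real matrix, Y ∈ ℝⁿ, λ > 0, and c > 0. If (μ̂, μ̃̂, β̂) ∈ ℝ × ℝ × ℝᵐ minimizes the objective (μ, μ̃, β) ↦ (1/2)‖Y − μ·1 − μ̃·1 − Aβ‖₂² + λ√(c·μ̃² + ‖β‖₂²), then μ̃̂ = 0. -/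
/-! Moving `μ̃` into the unpenalized intercept `μ` leaves the residual `Y − μ·1 − μ̃·1 − Aβ`
unchanged, while the penalty `√(c μ̃² + ‖β‖²)` strictly drops unless `μ̃ = 0`. -/

lemma eq_zero_of_sqrt_mul_sq_add_le_sqrt {c S x : ℝ} (hc : 0 < c) (hS : 0 ≤ S)
    (h : Real.sqrt (c * x ^ 2 + S) ≤ Real.sqrt S) : x = 0 := by
  have hle : c * x ^ 2 + S ≤ S := (Real.sqrt_le_sqrt_iff hS).mp h
  have hx2 : x ^ 2 = 0 := le_antisymm (nonpos_of_mul_nonpos_right (by linarith) hc) (sq_nonneg x)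
  exact pow_eq_zero_iff two_ne_zero |>.mp hx2

/-- If `(μhat, μthat, βhat)` minimizes
`(μ, μ̃, β) ↦ (1/2)‖Y − μ·1 − μ̃·1 − Aβ‖₂² + λ√(c·μ̃² + ‖β‖₂²)` with `λ > 0` and `c > 0`,
then the penalized intercept `μthat` is zero. -/
theorem stmt_2 (n m : ℕ) (A : Matrix (Fin n) (Fin m) ℝ) (Y : Fin n → ℝ)
    (lam c : ℝ) (hlam : 0 < lam) (hc : 0 < c)
    (μhat μthat : ℝ) (βhat : Fin m → ℝ)
    (hmin : ∀ (μ μt : ℝ) (β : Fin m → ℝ),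
      (1 / 2) * (∑ k, (Y k - μhat - μthat - A.mulVec βhat k) ^ 2)
          + lam * Real.sqrt (c * μthat ^ 2 + ∑ i, βhat i ^ 2) ≤
        (1 / 2) * (∑ k, (Y k - μ - μt - A.mulVec β k) ^ 2)
          + lam * Real.sqrt (c * μt ^ 2 + ∑ i, β i ^ 2)) :
    μthat = 0 := by
  have hshift := hmin (μhat + μthat) 0 βhat
  have hres : ∑ k, (Y k - (μhat + μthat) - 0 - A.mulVec βhat k) ^ 2
      = ∑ k, (Y k - μhat - μthat - A.mulVec βhat k) ^ 2 :=
    Finset.sum_congr rfl fun k _ => by ring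
  rw [hres, add_le_add_iff_left, mul_le_mul_iff_right₀ hlam, zero_pow two_ne_zero, mul_zero,
    zero_add] at hshift
  exact eq_zero_of_sqrt_mul_sq_add_le_sqrt hc (Finset.sum_nonneg fun i _ => sq_nonneg _) hshift
end

section
/- Let A be an n×m real matrix, Y ∈ {0,1}ⁿ, λ > 0, and c > 0. If (μ̂, μ̃̂, β̂) ∈ ℝ × ℝ × ℝᵐ minimizes the logistic-loss objective (μ, μ̃, β) ↦ −[Yᵀ(μ·1 + μ̃·1 + Aβ) − ∑ₖ₌₁ⁿ log(1 + exp((μ·1 + μ̃·1 + Aβ)ₖ))] + λ√(c·μ̃² + ‖β‖₂²), then μ̃̂ = 0. -/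
open scoped BigOperators

/-- If `(μhat, μthat, βhat)` minimizes the logistic-loss objective
`(μ, μ̃, β) ↦ −[Yᵀ(μ·1 + μ̃·1 + Aβ) − ∑ₖ log(1 + exp((μ·1 + μ̃·1 + Aβ)ₖ))] + λ√(c·μ̃² + ‖β‖₂²)`
with `Y ∈ {0,1}ⁿ`, `λ > 0` and `c > 0`, then the penalized intercept `μthat` is zero. -/
theorem stmt_3 (n m : ℕ) (A : Matrix (Fin n) (Fin m) ℝ)
    (Y : Fin n → ℝ) (hY : ∀ k, Y k = 0 ∨ Y k = 1)
    (lam c : ℝ) (hlam : 0 < lam) (hc : 0 < c)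
    (μhat μthat : ℝ) (βhat : Fin m → ℝ)
    (hmin : ∀ (μ μt : ℝ) (β : Fin m → ℝ),
      -((∑ k, Y k * (μhat + μthat + A.mulVec βhat k))
            - ∑ k, Real.log (1 + Real.exp (μhat + μthat + A.mulVec βhat k)))
          + lam * Real.sqrt (c * μthat ^ 2 + ∑ i, βhat i ^ 2) ≤
        -((∑ k, Y k * (μ + μt + A.mulVec β k))
            - ∑ k, Real.log (1 + Real.exp (μ + μt + A.mulVec β k)))
          + lam * Real.sqrt (c * μt ^ 2 + ∑ i, β i ^ 2)) :
    μthat = 0 := by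
  have h := hmin (μhat + μthat) 0 βhat
  have heq : ∀ k : Fin n, μhat + μthat + 0 + A.mulVec βhat k
      = μhat + μthat + A.mulVec βhat k := by intro k; ring
  simp only [heq] at h
  have hS : (0:ℝ) ≤ ∑ i, βhat i ^ 2 := Finset.sum_nonneg fun i _ => sq_nonneg _
  have hsqrt : Real.sqrt (c * μthat ^ 2 + ∑ i, βhat i ^ 2)
      ≤ Real.sqrt (c * 0 ^ 2 + ∑ i, βhat i ^ 2) :=
    le_of_mul_le_mul_left (by linarith) hlam
  have hx : (0:ℝ) ≤ c * μthat ^ 2 + ∑ i, βhat i ^ 2 := by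
    have := sq_nonneg μthat; nlinarith
  by_contra hne
  have hmu2 : 0 < μthat ^ 2 := by positivity
  have hlt : Real.sqrt (c * 0 ^ 2 + ∑ i, βhat i ^ 2)
      < Real.sqrt (c * μthat ^ 2 + ∑ i, βhat i ^ 2) := by
    apply Real.sqrt_lt_sqrt (by positivity)
    nlinarith
  linarith
end

section
/- Let X₁ be an n×L₁ indicator matrix, X₂ an n×L₂ indicator matrix with L₁, L₂ ≥ 1, X₁:₂ = X₁ * X₂, Y ∈ ℝⁿ, and λ > 0. Consider (A) the unconstrained group-lasso problem: minimize over (μ, β₁, β₂, β₁:₂) ∈ ℝ × ℝ^{L₁} × ℝ^{L₂} × ℝ^{L₁L₂} the objective (1/2)‖Y − μ·1 − X₁β₁ − X₂β₂ − X₁:₂β₁:₂‖₂² + λ(‖β₁‖₂ + ‖β₂‖₂ + ‖β₁:₂‖₂); and (B) the constrained overlapped group-lasso problem: minimize over (μ, α₁, α₂, α̃₁, α̃₂, α₁:₂) the objective (1/2)‖Y − μ·1 − X₁α₁ − X₂α₂ − X₁α̃₁ − X₂α̃₂ − X₁:₂α₁:₂‖₂² + λ(‖α₁‖₂ + ‖α₂‖₂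 + √(L₂‖α̃₁‖₂² + L₁‖α̃₂‖₂² + ‖α₁:₂‖₂²)) subject to ∑ᵢ α₁ⁱ = 0, ∑ⱼ α₂ʲ = 0, ∑ᵢ α̃₁ⁱ = 0, ∑ⱼ α̃₂ʲ = 0, ∑ᵢ α₁:₂ⁱʲ = 0 for every fixed j, and ∑ⱼ α₁:₂ⁱʲ = 0 for every fixed i. Then the two problems are equivalent: their infima are equal, and the map (μ, α₁, α₂, α̃₁, α̃₂, α₁:₂) ↦ (μ, α₁, α₂, Z₁α̃₁ + Z₂α̃₂ + α₁:₂) sends minimizers of (B) to minimizers of (A), and every minimizer of (A) arises in this way from a minimizer of (B). -/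
/-!
Every row of `X₁`, `X₂` and `X₁:₂` selects a single coefficient, so the loss of (A) depends
only on the fitted values `μ + β₁ i + β₂ j + β₁:₂ (i, j)` in the cells `(i, j)`; in particular
it does not change when the means of `β₁`, `β₂`, `β₁:₂` are moved into the intercept.
As `‖v‖² = L (mean v)² + ‖v - mean v‖²`, this centering lowers the penalty of (A), strictly
unless all three means vanish. A centered `β₁:₂` equals `Z₁a + Z₂b + c` for its two-way ANOVA
effects `a`, `b`, `c`, which satisfy the constraints of (B); for such effects the three summands
are orthogonal, with squared norms `L₂‖a‖²`, `L₁‖b‖²`, `‖c‖²`. So `toA` preserves the objective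
on the feasible set of (B), and every point of (A) is dominated by the image of a feasible point
of (B), strictly unless it is that image.
-/

open scoped BigOperators

noncomputable section

/-- Euclidean norm of a finitely indexed vector. -/
def norm2 {m : Type*} [Fintype m] (v : m → ℝ) : ℝ := Real.sqrt (∑ i, v i ^ 2)

/-- The interaction matrix `X₁:₂ = X₁ * X₂`: its column indexed by `(i,j)` is the
entrywise product of column `i` of `X₁` with column `j` of `X₂`. -/
def interact {n L₁ L₂ : ℕ} (X₁ : Matrix (Fin n) (Fin L₁) ℝ)
    (X₂ : Matrix (Fin n) (Fin L₂) ℝ) : Matrix (Fin n) (Fin L₁ × Fin L₂) ℝ :=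
  fun k q => X₁ k q.1 * X₂ k q.2

/-- `Z₁`: the `(L₁L₂)×L₁` matrix whose row indexed by `(i,j)` has a `1` in column `i`. -/
def Zmat1 (L₁ L₂ : ℕ) : Matrix (Fin L₁ × Fin L₂) (Fin L₁) ℝ :=
  fun q i => if q.1 = i then 1 else 0

/-- `Z₂`: the `(L₁L₂)×L₂` matrix whose row indexed by `(i,j)` has a `1` in column `j`. -/
def Zmat2 (L₁ L₂ : ℕ) : Matrix (Fin L₁ × Fin L₂) (Fin L₂) ℝ :=
  fun q j => if q.2 = j then 1 else 0

/-- Objective of the unconstrained group-lasso problem (A). -/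
def objA {n L₁ L₂ : ℕ} (X₁ : Matrix (Fin n) (Fin L₁) ℝ)
    (X₂ : Matrix (Fin n) (Fin L₂) ℝ) (Y : Fin n → ℝ) (lam : ℝ)
    (p : ℝ × (Fin L₁ → ℝ) × (Fin L₂ → ℝ) × (Fin L₁ × Fin L₂ → ℝ)) : ℝ :=
  (1 / 2) * (∑ k, (Y k - p.1 - X₁.mulVec p.2.1 k - X₂.mulVec p.2.2.1 k
      - (interact X₁ X₂).mulVec p.2.2.2 k) ^ 2)
    + lam * (norm2 p.2.1 + norm2 p.2.2.1 + norm2 p.2.2.2)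

/-- Objective of the constrained overlapped group-lasso problem (B). -/
def objB {n L₁ L₂ : ℕ} (X₁ : Matrix (Fin n) (Fin L₁) ℝ)
    (X₂ : Matrix (Fin n) (Fin L₂) ℝ) (Y : Fin n → ℝ) (lam : ℝ)
    (q : ℝ × (Fin L₁ → ℝ) × (Fin L₂ → ℝ) × (Fin L₁ → ℝ) × (Fin L₂ → ℝ)
      × (Fin L₁ × Fin L₂ → ℝ)) : ℝ :=
  (1 / 2) * (∑ k, (Y k - q.1 - X₁.mulVec q.2.1 k - X₂.mulVec q.2.2.1 k
      - X₁.mulVec q.2.2.2.1 k - X₂.mulVec q.2.2.2.2.1 k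
      - (interact X₁ X₂).mulVec q.2.2.2.2.2 k) ^ 2)
    + lam * (norm2 q.2.1 + norm2 q.2.2.1
      + Real.sqrt ((L₂ : ℝ) * ∑ i, q.2.2.2.1 i ^ 2 + (L₁ : ℝ) * ∑ j, q.2.2.2.2.1 j ^ 2
          + ∑ r, q.2.2.2.2.2 r ^ 2))

/-- Zero-sum constraints for problem (B). -/
def constraintsB {L₁ L₂ : ℕ}
    (q : ℝ × (Fin L₁ → ℝ) × (Fin L₂ → ℝ) × (Fin L₁ → ℝ) × (Fin L₂ → ℝ)
      × (Fin L₁ × Fin L₂ → ℝ)) : Prop :=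
  (∑ i, q.2.1 i = 0) ∧ (∑ j, q.2.2.1 j = 0) ∧ (∑ i, q.2.2.2.1 i = 0) ∧
    (∑ j, q.2.2.2.2.1 j = 0) ∧ (∀ j, ∑ i, q.2.2.2.2.2 (i, j) = 0) ∧
    (∀ i, ∑ j, q.2.2.2.2.2 (i, j) = 0)

/-- The map from problem-(B) variables to problem-(A) variables:
`(μ, α₁, α₂, α̃₁, α̃₂, α₁:₂) ↦ (μ, α₁, α₂, Z₁α̃₁ + Z₂α̃₂ + α₁:₂)`. -/
def toA {L₁ L₂ : ℕ}
    (q : ℝ × (Fin L₁ → ℝ) × (Fin L₂ → ℝ) × (Fin L₁ → ℝ) × (Fin L₂ → ℝ)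
      × (Fin L₁ × Fin L₂ → ℝ)) :
    ℝ × (Fin L₁ → ℝ) × (Fin L₂ → ℝ) × (Fin L₁ × Fin L₂ → ℝ) :=
  (q.1, q.2.1, q.2.2.1,
    fun r => (Zmat1 L₁ L₂).mulVec q.2.2.2.1 r + (Zmat2 L₁ L₂).mulVec q.2.2.2.2.1 r
      + q.2.2.2.2.2 r)

open Finset

section EquivalentProblems

variable {α β γ : Type*} {f : α → γ} {g : β → γ} {S : Set β} {T : β → α} {C : α → β}

theorem sInf_range_eq_sInf_image [ConditionallyCompleteLinearOrder γ]
    (hT : ∀ q ∈ S, f (T q) = g q) (hCS : ∀ p, C p ∈ S) (hC : ∀ p, g (C p) ≤ f p) :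
    sInf (Set.range f) = sInf (g '' S) :=
  csInf_eq_csInf_of_forall_exists_le
    (by rintro _ ⟨p, rfl⟩; exact ⟨g (C p), ⟨C p, hCS p, rfl⟩, hC p⟩)
    (by rintro _ ⟨q, hq, rfl⟩; exact ⟨f (T q), ⟨T q, rfl⟩, (hT q hq).le⟩)

variable [Preorder γ]

theorem isMinOn_univ_of_isMinOn (hT : ∀ q ∈ S, f (T q) = g q) (hCS : ∀ p, C p ∈ S)
    (hC : ∀ p, g (C p) ≤ f p) {q : β} (hq : q ∈ S) (hmin : IsMinOn g S q) :
    IsMinOn f Set.univ (T q) :=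
  isMinOn_univ_iff.mpr fun p =>
    calc f (T q) = g q := hT q hq
      _ ≤ g (C p) := isMinOn_iff.mp hmin _ (hCS p)
      _ ≤ f p := hC p

theorem exists_isMinOn_of_isMinOn_univ (hT : ∀ q ∈ S, f (T q) = g q) (hCS : ∀ p, C p ∈ S)
    (hC : ∀ p, g (C p) ≤ f p) (hCT : ∀ p, f p ≤ g (C p) → T (C p) = p) {p : α}
    (hmin : IsMinOn f Set.univ p) : ∃ q ∈ S, IsMinOn g S q ∧ T q = p := by
  have hfp : ∀ p', f p ≤ f p' := isMinOn_univ_iff.mp hmin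
  refine ⟨C p, hCS p, isMinOn_iff.mpr fun q' hq' => ?_, hCT p ?_⟩
  · calc g (C p) ≤ f p := hC p
      _ ≤ f (T q') := hfp _
      _ = g q' := hT q' hq'
  · calc f p ≤ f (T (C p)) := hfp _
      _ = g (C p) := hT _ (hCS p)

end EquivalentProblems

section Centering

variable {ι : Type*} [Fintype ι]

def demean (v : ι → ℝ) : ι → ℝ := fun i => v i - 𝔼 j, v j

theorem sum_demean (v : ι → ℝ) : ∑ i, demean v i = 0 := by
  simp only [demean, sum_sub_distrib, sum_const, card_univ, nsmul_eq_mul,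
    Fintype.card_mul_expect, sub_self]

theorem demean_eq_self {v : ι → ℝ} (h : 𝔼 j, v j = 0) : demean v = v :=
  funext fun i => by rw [demean, h, sub_zero]

theorem sum_add_sq_of_sum_eq_zero (m : ℝ) {w : ι → ℝ} (hw : ∑ i, w i = 0) :
    ∑ i, (m + w i) ^ 2 = Fintype.card ι * m ^ 2 + ∑ i, w i ^ 2 := by
  have hsq : ∀ i, (m + w i) ^ 2 = m ^ 2 + 2 * m * w i + w i ^ 2 := fun i => by ring
  simp only [hsq, sum_add_distrib, ← mul_sum, hw, sum_const, card_univ, nsmul_eq_mul]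
  ring

theorem sum_sq_eq_card_mul_expect_sq_add (v : ι → ℝ) :
    ∑ i, v i ^ 2 = Fintype.card ι * (𝔼 j, v j) ^ 2 + ∑ i, demean v i ^ 2 := by
  rw [← sum_add_sq_of_sum_eq_zero _ (sum_demean v)]
  simp [demean]

theorem norm2_demean_le (v : ι → ℝ) : norm2 (demean v) ≤ norm2 v := by
  refine Real.sqrt_le_sqrt ?_
  rw [sum_sq_eq_card_mul_expect_sq_add v]
  have : 0 ≤ (Fintype.card ι : ℝ) * (𝔼 j, v j) ^ 2 := by positivity
  linarith

theorem expect_eq_zero_of_norm2_le_norm2_demean {v : ι → ℝ}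
    (h : norm2 v ≤ norm2 (demean v)) : 𝔼 j, v j = 0 := by
  have hsq : ∑ i, v i ^ 2 ≤ ∑ i, demean v i ^ 2 :=
    (Real.sqrt_le_sqrt_iff (sum_nonneg fun i _ => sq_nonneg _)).mp h
  rw [sum_sq_eq_card_mul_expect_sq_add v] at hsq
  rcases eq_or_ne (Fintype.card ι) 0 with hcard | hcard
  · rw [Fintype.expect_eq_sum_div_card, hcard, Nat.cast_zero, div_zero]
  · have hsq0 : (𝔼 j, v j) ^ 2 ≤ 0 :=
      nonpos_of_mul_nonpos_right (a := (Fintype.card ι : ℝ)) (by linarith)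
      (Nat.cast_pos.mpr (Nat.pos_of_ne_zero hcard))
    exact pow_eq_zero_iff two_ne_zero |>.mp (le_antisymm hsq0 (sq_nonneg _))

end Centering

section TwoWayDecomposition

variable {ι κ : Type*} [Fintype ι] [Fintype κ]

theorem sum_sq_add_add_of_sum_eq_zero {a : ι → ℝ} {b : κ → ℝ} {c : ι × κ → ℝ}
    (hb : ∑ j, b j = 0) (hcol : ∀ j, ∑ i, c (i, j) = 0)
    (hrow : ∀ i, ∑ j, c (i, j) = 0) :
    ∑ r, (a r.1 + b r.2 + c r) ^ 2
      = Fintype.card κ * ∑ i, a i ^ 2 + Fintype.card ι * ∑ j, b j ^ 2 + ∑ r, c r ^ 2 := by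
  have hrow_sq : ∀ i, ∑ j, (a i + (b j + c (i, j))) ^ 2
      = Fintype.card κ * a i ^ 2 + ∑ j, (b j + c (i, j)) ^ 2 := fun i =>
    sum_add_sq_of_sum_eq_zero _ (by rw [sum_add_distrib, hb, hrow, add_zero])
  have hcol_sq : ∀ j, ∑ i, (b j + c (i, j)) ^ 2
      = Fintype.card ι * b j ^ 2 + ∑ i, c (i, j) ^ 2 := fun j =>
    sum_add_sq_of_sum_eq_zero _ (hcol j)
  simp only [Fintype.sum_prod_type, add_assoc, hrow_sq, sum_add_distrib, ← mul_sum]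
  rw [sum_comm (f := fun i j => (b j + c (i, j)) ^ 2)]
  simp only [hcol_sq, sum_add_distrib, ← mul_sum]
  rw [sum_comm (f := fun i j => c (i, j) ^ 2)]

def rowEffect (v : ι × κ → ℝ) (i : ι) : ℝ := 𝔼 j, v (i, j) - 𝔼 r, v r

def colEffect (v : ι × κ → ℝ) (j : κ) : ℝ := 𝔼 i, v (i, j) - 𝔼 r, v r

def interactionEffect (v : ι × κ → ℝ) (r : ι × κ) : ℝ :=
  v r - 𝔼 j, v (r.1, j) - 𝔼 i, v (i, r.2) + 𝔼 r', v r'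

variable (v : ι × κ → ℝ)

theorem rowEffect_add_colEffect_add_interactionEffect (r : ι × κ) :
    rowEffect v r.1 + colEffect v r.2 + interactionEffect v r = demean v r := by
  simp only [rowEffect, colEffect, interactionEffect, demean]
  ring

theorem expect_prod_eq_expect_expect : 𝔼 r, v r = 𝔼 i, 𝔼 j, v (i, j) := by
  rw [← univ_product_univ, expect_product]

theorem sum_rowEffect : ∑ i, rowEffect v i = 0 := by
  simpa only [rowEffect, demean, ← expect_prod_eq_expect_expect]
    using sum_demean fun i => 𝔼 j, v (i, j)

theorem sum_colEffect : ∑ j, colEffect v j = 0 := by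
  have hswap : 𝔼 r, v r = 𝔼 j, 𝔼 i, v (i, j) := by
    rw [expect_prod_eq_expect_expect, expect_comm]
  simpa only [colEffect, demean, ← hswap] using sum_demean fun j => 𝔼 i, v (i, j)

theorem sum_interactionEffect_fst (j : κ) : ∑ i, interactionEffect v (i, j) = 0 := by
  have hsplit : ∀ i, interactionEffect v (i, j) = demean (fun i => v (i, j)) i - rowEffect v i :=
    fun i => by simp only [interactionEffect, demean, rowEffect]; ring
  simp only [hsplit, sum_sub_distrib, sum_demean, sum_rowEffect, sub_zero]

theorem sum_interactionEffect_snd (i : ι) : ∑ j, interactionEffect v (i, j) = 0 := by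
  have hsplit : ∀ j, interactionEffect v (i, j) = demean (fun j => v (i, j)) j - colEffect v j :=
    fun j => by simp only [interactionEffect, demean, colEffect]; ring
  simp only [hsplit, sum_sub_distrib, sum_demean, sum_colEffect, sub_zero]

end TwoWayDecomposition

def IsIndicatorMatrix {R m ι : Type*} [Zero R] [One R] [DecidableEq ι] (X : Matrix m ι R) :
    Prop :=
  ∀ k, ∃ i, ∀ j, X k j = if j = i then 1 else 0

theorem mulVec_apply_of_row_eq_ite {R m ι : Type*} [NonAssocSemiring R] [Fintype ι]
    [DecidableEq ι] {X : Matrix m ι R} {k : m} {i : ι}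
    (h : ∀ j, X k j = if j = i then 1 else 0) (v : ι → R) : X.mulVec v k = v i := by
  simp [Matrix.mulVec, dotProduct, h]

section GroupLasso

variable {n L₁ L₂ : ℕ}

theorem interact_mulVec_apply {X₁ : Matrix (Fin n) (Fin L₁) ℝ} {X₂ : Matrix (Fin n) (Fin L₂) ℝ}
    {k : Fin n} {i : Fin L₁} {j : Fin L₂} (h₁ : ∀ i', X₁ k i' = if i' = i then 1 else 0)
    (h₂ : ∀ j', X₂ k j' = if j' = j then 1 else 0) (v : Fin L₁ × Fin L₂ → ℝ) :
    (interact X₁ X₂).mulVec v k = v (i, j) := by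
  simp [Matrix.mulVec, dotProduct, interact, h₁, h₂, Fintype.sum_prod_type]

theorem Zmat1_mulVec_apply (a : Fin L₁ → ℝ) (r : Fin L₁ × Fin L₂) :
    (Zmat1 L₁ L₂).mulVec a r = a r.1 := by
  simp [Zmat1, Matrix.mulVec, dotProduct]

theorem Zmat2_mulVec_apply (b : Fin L₂ → ℝ) (r : Fin L₁ × Fin L₂) :
    (Zmat2 L₁ L₂).mulVec b r = b r.2 := by
  simp [Zmat2, Matrix.mulVec, dotProduct]

def centerA (p : ℝ × (Fin L₁ → ℝ) × (Fin L₂ → ℝ) × (Fin L₁ × Fin L₂ → ℝ)) :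
    ℝ × (Fin L₁ → ℝ) × (Fin L₂ → ℝ) × (Fin L₁ × Fin L₂ → ℝ) :=
  (p.1 + 𝔼 i, p.2.1 i + 𝔼 j, p.2.2.1 j + 𝔼 r, p.2.2.2 r,
    demean p.2.1, demean p.2.2.1, demean p.2.2.2)

def centerB (p : ℝ × (Fin L₁ → ℝ) × (Fin L₂ → ℝ) × (Fin L₁ × Fin L₂ → ℝ)) :
    ℝ × (Fin L₁ → ℝ) × (Fin L₂ → ℝ) × (Fin L₁ → ℝ) × (Fin L₂ → ℝ) × (Fin L₁ × Fin L₂ → ℝ) :=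
  (p.1 + 𝔼 i, p.2.1 i + 𝔼 j, p.2.2.1 j + 𝔼 r, p.2.2.2 r, demean p.2.1, demean p.2.2.1,
    rowEffect p.2.2.2, colEffect p.2.2.2, interactionEffect p.2.2.2)

theorem constraintsB_centerB (p : ℝ × (Fin L₁ → ℝ) × (Fin L₂ → ℝ) × (Fin L₁ × Fin L₂ → ℝ)) :
    constraintsB (centerB p) :=
  ⟨sum_demean _, sum_demean _, sum_rowEffect _, sum_colEffect _,
    sum_interactionEffect_fst _, sum_interactionEffect_snd _⟩

theorem toA_centerB (p : ℝ × (Fin L₁ → ℝ) × (Fin L₂ → ℝ) × (Fin L₁ × Fin L₂ → ℝ)) :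
    toA (centerB p) = centerA p := by
  simp only [toA, centerB, centerA, Zmat1_mulVec_apply, Zmat2_mulVec_apply,
    rowEffect_add_colEffect_add_interactionEffect]

variable {X₁ : Matrix (Fin n) (Fin L₁) ℝ} {X₂ : Matrix (Fin n) (Fin L₂) ℝ}

theorem objA_centerA
    (hX₁ : IsIndicatorMatrix X₁) (hX₂ : IsIndicatorMatrix X₂) (Y : Fin n → ℝ) (lam : ℝ) (p : ℝ × (Fin L₁ → ℝ) × (Fin L₂ → ℝ) × (Fin L₁ × Fin L₂ → ℝ)) :
    objA X₁ X₂ Y lam (centerA p) = objA X₁ X₂ Y lam p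
      - lam * ((norm2 p.2.1 - norm2 (demean p.2.1)) + (norm2 p.2.2.1 - norm2 (demean p.2.2.1))
        + (norm2 p.2.2.2 - norm2 (demean p.2.2.2))) := by
  have hres : ∀ k, Y k - (centerA p).1 - X₁.mulVec (centerA p).2.1 k
      - X₂.mulVec (centerA p).2.2.1 k - (interact X₁ X₂).mulVec (centerA p).2.2.2 k
      = Y k - p.1 - X₁.mulVec p.2.1 k - X₂.mulVec p.2.2.1 k
        - (interact X₁ X₂).mulVec p.2.2.2 k := fun k => by
    obtain ⟨i, hi⟩ := hX₁ k
    obtain ⟨j, hj⟩ := hX₂ k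
    simp only [centerA, demean, mulVec_apply_of_row_eq_ite hi, mulVec_apply_of_row_eq_ite hj,
      interact_mulVec_apply hi hj]
    ring
  simp only [objA, hres]
  simp only [centerA]
  ring

theorem objA_centerA_le
    (hX₁ : IsIndicatorMatrix X₁) (hX₂ : IsIndicatorMatrix X₂) (Y : Fin n → ℝ) {lam : ℝ} (hlam : 0 ≤ lam)
    (p : ℝ × (Fin L₁ → ℝ) × (Fin L₂ → ℝ) × (Fin L₁ × Fin L₂ → ℝ)) :
    objA X₁ X₂ Y lam (centerA p) ≤ objA X₁ X₂ Y lam p := by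
  rw [objA_centerA hX₁ hX₂]
  have h₁ := norm2_demean_le p.2.1
  have h₂ := norm2_demean_le p.2.2.1
  have h₃ := norm2_demean_le p.2.2.2
  have : 0 ≤ lam * ((norm2 p.2.1 - norm2 (demean p.2.1))
      + (norm2 p.2.2.1 - norm2 (demean p.2.2.1)) + (norm2 p.2.2.2 - norm2 (demean p.2.2.2))) :=
    mul_nonneg hlam (by linarith)
  linarith

theorem centerA_eq_self_of_objA_le
    (hX₁ : IsIndicatorMatrix X₁) (hX₂ : IsIndicatorMatrix X₂) (Y : Fin n → ℝ) {lam : ℝ} (hlam : 0 < lam)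
    {p : ℝ × (Fin L₁ → ℝ) × (Fin L₂ → ℝ) × (Fin L₁ × Fin L₂ → ℝ)}
    (h : objA X₁ X₂ Y lam p ≤ objA X₁ X₂ Y lam (centerA p)) : centerA p = p := by
  rw [objA_centerA hX₁ hX₂] at h
  have hgap : (norm2 p.2.1 - norm2 (demean p.2.1)) + (norm2 p.2.2.1 - norm2 (demean p.2.2.1))
      + (norm2 p.2.2.2 - norm2 (demean p.2.2.2)) ≤ 0 :=
    nonpos_of_mul_nonpos_right (by linarith) hlam
  have h₁ := norm2_demean_le p.2.1
  have h₂ := norm2_demean_le p.2.2.1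
  have h₃ := norm2_demean_le p.2.2.2
  have e₁ := expect_eq_zero_of_norm2_le_norm2_demean (v := p.2.1) (by linarith)
  have e₂ := expect_eq_zero_of_norm2_le_norm2_demean (v := p.2.2.1) (by linarith)
  have e₃ := expect_eq_zero_of_norm2_le_norm2_demean (v := p.2.2.2) (by linarith)
  simp only [centerA, demean_eq_self, e₁, e₂, e₃, add_zero]

theorem objA_toA
    (hX₁ : IsIndicatorMatrix X₁) (hX₂ : IsIndicatorMatrix X₂) (Y : Fin n → ℝ) (lam : ℝ)
    {q : ℝ × (Fin L₁ → ℝ) × (Fin L₂ → ℝ) × (Fin L₁ → ℝ) × (Fin L₂ → ℝ) × (Fin L₁ × Fin L₂ → ℝ)}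
    (hq : constraintsB q) : objA X₁ X₂ Y lam (toA q) = objB X₁ X₂ Y lam q := by
  obtain ⟨-, -, -, hb, hcol, hrow⟩ := hq
  have hres : ∀ k, Y k - (toA q).1 - X₁.mulVec (toA q).2.1 k
      - X₂.mulVec (toA q).2.2.1 k - (interact X₁ X₂).mulVec (toA q).2.2.2 k
      = Y k - q.1 - X₁.mulVec q.2.1 k - X₂.mulVec q.2.2.1 k - X₁.mulVec q.2.2.2.1 k
        - X₂.mulVec q.2.2.2.2.1 k - (interact X₁ X₂).mulVec q.2.2.2.2.2 k := fun k => by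
    obtain ⟨i, hi⟩ := hX₁ k
    obtain ⟨j, hj⟩ := hX₂ k
    simp only [toA, mulVec_apply_of_row_eq_ite hi, mulVec_apply_of_row_eq_ite hj,
      interact_mulVec_apply hi hj, Zmat1_mulVec_apply, Zmat2_mulVec_apply]
    ring
  have hpen : norm2 (toA q).2.2.2 = Real.sqrt ((L₂ : ℝ) * ∑ i, q.2.2.2.1 i ^ 2
      + (L₁ : ℝ) * ∑ j, q.2.2.2.2.1 j ^ 2 + ∑ r, q.2.2.2.2.2 r ^ 2) := by
    simp only [norm2, toA, Zmat1_mulVec_apply, Zmat2_mulVec_apply,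
      sum_sq_add_add_of_sum_eq_zero hb hcol hrow, Fintype.card_fin]
  simp only [objA, objB, hres, hpen]
  rfl

end GroupLasso

theorem stmt_10_general (n L₁ L₂ : ℕ)
    (X₁ : Matrix (Fin n) (Fin L₁) ℝ)
    (hX₁ : ∀ k : Fin n, ∃ i : Fin L₁, ∀ j : Fin L₁, X₁ k j = if j = i then (1 : ℝ) else 0)
    (X₂ : Matrix (Fin n) (Fin L₂) ℝ)
    (hX₂ : ∀ k : Fin n, ∃ i : Fin L₂, ∀ j : Fin L₂, X₂ k j = if j = i then (1 : ℝ) else 0)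
    (Y : Fin n → ℝ) (lam : ℝ) (hlam : 0 < lam) :
    (sInf (Set.range (objA X₁ X₂ Y lam))
        = sInf (objB X₁ X₂ Y lam '' {q | constraintsB q})) ∧
    (∀ q, constraintsB q → (∀ q', constraintsB q' → objB X₁ X₂ Y lam q ≤ objB X₁ X₂ Y lam q') →
      ∀ p, objA X₁ X₂ Y lam (toA q) ≤ objA X₁ X₂ Y lam p) ∧
    (∀ p, (∀ p', objA X₁ X₂ Y lam p ≤ objA X₁ X₂ Y lam p') →
      ∃ q, constraintsB q ∧
        (∀ q', constraintsB q' → objB X₁ X₂ Y lam q ≤ objB X₁ X₂ Y lam q') ∧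
        toA q = p) := by
  have hT : ∀ q ∈ {q | constraintsB q}, objA X₁ X₂ Y lam (toA q) = objB X₁ X₂ Y lam q :=
    fun _ hq => objA_toA hX₁ hX₂ Y lam hq
  have hC : ∀ p, objB X₁ X₂ Y lam (centerB p) ≤ objA X₁ X₂ Y lam p := fun p => by
    rw [← hT _ (constraintsB_centerB p), toA_centerB]
    exact objA_centerA_le hX₁ hX₂ Y hlam.le p
  have hCT : ∀ p, objA X₁ X₂ Y lam p ≤ objB X₁ X₂ Y lam (centerB p) → toA (centerB p) = p :=
    fun p h => by
      rw [← hT _ (constraintsB_centerB p), toA_centerB] at h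
      rw [toA_centerB]
      exact centerA_eq_self_of_objA_le hX₁ hX₂ Y hlam h
  refine ⟨sInf_range_eq_sInf_image hT constraintsB_centerB hC, fun q hq hmin => ?_,
    fun p hmin => ?_⟩
  · exact isMinOn_univ_iff.mp <|
      isMinOn_univ_of_isMinOn hT constraintsB_centerB hC hq (isMinOn_iff.mpr hmin)
  · obtain ⟨q, hq, hqmin, rfl⟩ := exists_isMinOn_of_isMinOn_univ hT constraintsB_centerB hC hCT
      (isMinOn_univ_iff.mpr hmin)
    exact ⟨q, hq, isMinOn_iff.mp hqmin, rfl⟩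

/-- **Theorem 1.** The unconstrained group-lasso (A) and the constrained
overlapped group-lasso (B) are equivalent: their infima coincide, `toA` maps minimizers
of (B) to minimizers of (A), and every minimizer of (A) arises in this way. -/
theorem stmt_10 (n L₁ L₂ : ℕ) (hL₁ : 1 ≤ L₁) (hL₂ : 1 ≤ L₂)
    (X₁ : Matrix (Fin n) (Fin L₁) ℝ)
    (hX₁ : ∀ k : Fin n, ∃ i : Fin L₁, ∀ j : Fin L₁, X₁ k j = if j = i then (1 : ℝ) else 0)
    (X₂ : Matrix (Fin n) (Fin L₂) ℝ)
    (hX₂ : ∀ k : Fin n, ∃ i : Fin L₂, ∀ j : Fin L₂, X₂ k j = if j = i then (1 : ℝ) else 0)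
    (Y : Fin n → ℝ) (lam : ℝ) (hlam : 0 < lam) :
    (sInf (Set.range (objA X₁ X₂ Y lam))
        = sInf (objB X₁ X₂ Y lam '' {q | constraintsB q})) ∧
    (∀ q, constraintsB q → (∀ q', constraintsB q' → objB X₁ X₂ Y lam q ≤ objB X₁ X₂ Y lam q') →
      ∀ p, objA X₁ X₂ Y lam (toA q) ≤ objA X₁ X₂ Y lam p) ∧
    (∀ p, (∀ p', objA X₁ X₂ Y lam p ≤ objA X₁ X₂ Y lam p') →
      ∃ q, constraintsB q ∧
        (∀ q', constraintsB q' → objB X₁ X₂ Y lam q ≤ objB X₁ X₂ Y lam q') ∧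
        toA q = p) :=
  stmt_10_general n L₁ L₂ X₁ hX₁ X₂ hX₂ Y lam hlam

end
end
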